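/- Let q be an odd prime, k ≥ 1, and let C be a k-dimensional ZMod q-subspace of (Fin n → ZMod q) with |w_L(C)| = (q^k − 1)/2 (a Lee-MWS code). Then n·(q − 1) ≥ q^k − 1 + 2(k − 1); equivalently n ≥ (q^k − 1)/(q − 1) + ⌈2(k − 1)/(q − 1)⌉. -/
import Mathlib


/-- The Lee weight of an element of `ZMod q`. -/
def leeWt {q : ℕ} (α : ZMod q) : ℕ := min α.val (q - α.val)

/-- The Lee weight of a vector. -/
def leeW {q n : ℕ} (c : Fin n → ZMod q) : ℕ := ∑ i, leeWt (c i)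

/-- The Lee weight set of a set of vectors. -/
def leeSet {q n : ℕ} (C : Set (Fin n → ZMod q)) : Set ℕ :=
  {x | ∃ c ∈ C, c ≠ 0 ∧ leeW c = x}

lemma leeWt_neg {q : ℕ} [NeZero q] (a : ZMod q) : leeWt (-a) = leeWt a := by
  by_cases h : a = 0
  · simp [h]
  · haveI : NeZero a := ⟨h⟩
    have hv : (-a).val = q - a.val := ZMod.val_neg_of_ne_zero a
    have hlt : a.val < q := ZMod.val_lt a
    unfold leeWt
    rw [hv, Nat.sub_sub_self hlt.le, min_comm]

lemma leeWt_le {q : ℕ} [NeZero q] (hodd : Odd q) (a : ZMod q) : leeWt a ≤ (q - 1) / 2 := by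
  obtain ⟨m, hm⟩ := hodd
  have hlt : a.val < q := ZMod.val_lt a
  have h1 : leeWt a ≤ a.val := min_le_left _ _
  have h2 : leeWt a ≤ q - a.val := min_le_right _ _
  omega

lemma leeWt_pos {q : ℕ} [NeZero q] {a : ZMod q} (h : a ≠ 0) : 1 ≤ leeWt a := by
  have hlt : a.val < q := ZMod.val_lt a
  have h0 : a.val ≠ 0 := fun hh => h ((ZMod.val_eq_zero a).1 hh)
  unfold leeWt
  omega

lemma leeW_neg {q n : ℕ} [NeZero q] (c : Fin n → ZMod q) : leeW (-c) = leeW c := by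
  unfold leeW
  exact Finset.sum_congr rfl fun i _ => by rw [Pi.neg_apply, leeWt_neg]

theorem stmt10 (q n k : ℕ) (hq : q.Prime) (hodd : Odd q) (hk : 1 ≤ k)
    (C : Submodule (ZMod q) (Fin n → ZMod q))
    (hdim : Module.finrank (ZMod q) C = k)
    (hMWS : (leeSet (C : Set (Fin n → ZMod q))).ncard = (q ^ k - 1) / 2) :
    q ^ k - 1 + 2 * (k - 1) ≤ n * (q - 1) := by
  classical
  haveI := Fact.mk hq
  haveI : NeZero q := ⟨hq.ne_zero⟩
  have hq3 : 3 ≤ q := by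
    obtain ⟨m, hm⟩ := hodd
    have := hq.two_le
    omega
  -- cancellation of doubling in ZMod q
  have haddself : ∀ a : ZMod q, a + a = 0 → a = 0 := by
    intro a h
    have h2 : (2 : ZMod q) * a = 0 := by rw [two_mul]; exact h
    rcases mul_eq_zero.1 h2 with h' | h'
    · exfalso
      have : ((2 : ℕ) : ZMod q) = 0 := by push_cast; exact h'
      have := (ZMod.natCast_eq_zero_iff 2 q).1 this
      have := Nat.le_of_dvd (by norm_num) this
      omega
    · exact h'
  -- cardinality of C
  haveI : Fintype C := Fintype.ofFinite C
  have hcardC : Fintype.card C = q ^ k := by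
    rw [Module.card_eq_pow_finrank (K := ZMod q) (V := C), hdim, ZMod.card]
  set T : Finset (Fin n → ZMod q) :=
    Finset.univ.filter (fun c => c ∈ C ∧ c ≠ 0) with hT
  have hTmem : ∀ c, c ∈ T ↔ c ∈ C ∧ c ≠ 0 := by
    intro c; simp [hT]
  have hTcard : T.card + 1 = q ^ k := by
    have h0 : (Finset.univ.filter (fun c : Fin n → ZMod q => c ∈ C)).card = q ^ k := by
      rw [← hcardC]
      exact (Fintype.card_of_subtype _ (fun x => by simp)).symm
    have hins : (Finset.univ.filter (fun c : Fin n → ZMod q => c ∈ C)) = insert 0 T := by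
      ext c
      have h0C : (0 : Fin n → ZMod q) ∈ C := C.zero_mem
      simp only [Finset.mem_filter, Finset.mem_univ, true_and, Finset.mem_insert, hTmem]
      constructor
      · intro h
        by_cases hc : c = 0
        · exact Or.inl hc
        · exact Or.inr ⟨h, hc⟩
      · rintro (rfl | ⟨h, _⟩)
        · exact h0C
        · exact h
    have h0T : (0 : Fin n → ZMod q) ∉ T := by simp [hTmem]
    rw [hins, Finset.card_insert_of_notMem h0T] at h0
    omega
  set img : Finset ℕ := T.image leeW with himgdef
  have himg : leeSet (C : Set (Fin n → ZMod q)) = ↑img := by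
    ext x
    simp only [leeSet, Set.mem_setOf_eq, himgdef, Finset.coe_image, Set.mem_image,
      Finset.mem_coe, hTmem]
    constructor
    · rintro ⟨c, hc, hc0, rfl⟩; exact ⟨c, ⟨hc, hc0⟩, rfl⟩
    · rintro ⟨c, ⟨hc, hc0⟩, rfl⟩; exact ⟨c, hc, hc0, rfl⟩
  have hcardimg : img.card = (q ^ k - 1) / 2 := by
    rw [← Set.ncard_coe_finset, ← himg]; exact hMWS
  have hoddpow : Odd (q ^ k) := hodd.pow
  -- membership of negation and basic pair facts
  have hnegT : ∀ c ∈ T, -c ∈ T := by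
    intro c hc
    obtain ⟨hcC, hc0⟩ := (hTmem c).1 hc
    exact (hTmem _).2 ⟨C.neg_mem hcC, fun h => hc0 (by simpa using congrArg Neg.neg h)⟩
  have hneq : ∀ c : Fin n → ZMod q, c ≠ 0 → c ≠ -c := by
    intro c hc0 h
    apply hc0
    funext i
    apply haddself
    have hh := congrFun h i
    simp only [Pi.neg_apply] at hh
    linear_combination hh
  -- injectivity on antipodal pairs
  have hinj : ∀ c ∈ T, ∀ c' ∈ T, leeW c' = leeW c → c' = c ∨ c' = -c := by
    by_contra hcon
    push_neg at hcon
    obtain ⟨c, hc, c', hc', hw, hne1, hne2⟩ := hcon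
    obtain ⟨hcC, hc0⟩ := (hTmem c).1 hc
    obtain ⟨hcC', hc0'⟩ := (hTmem c').1 hc'
    have key : ∀ y ∈ img, 2 ≤ (T.filter (fun z => leeW z = y)).card := by
      intro y hy
      obtain ⟨d, hdT, rfl⟩ := Finset.mem_image.1 hy
      have hd0 : d ≠ 0 := ((hTmem d).1 hdT).2
      have hsub : ({d, -d} : Finset _) ⊆ T.filter (fun z => leeW z = leeW d) := by
        intro z hz
        rcases Finset.mem_insert.1 hz with rfl | hz
        · exact Finset.mem_filter.2 ⟨hdT, rfl⟩
        · rw [Finset.mem_singleton] at hz; subst hz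
          exact Finset.mem_filter.2 ⟨hnegT d hdT, leeW_neg d⟩
      have hcard2 : ({d, -d} : Finset _).card = 2 := by
        rw [Finset.card_insert_of_notMem (by simpa using hneq d hd0), Finset.card_singleton]
      calc 2 = ({d, -d} : Finset _).card := hcard2.symm
        _ ≤ _ := Finset.card_le_card hsub
    have key2 : 4 ≤ (T.filter (fun z => leeW z = leeW c)).card := by
      have hccn : c ≠ -c := hneq c hc0
      have hccn' : c' ≠ -c' := hneq c' hc0'
      have h3 : c ≠ -c' := by
        intro h
        apply hne2
        rw [h]; simp
      have h4 : (-c : Fin n → ZMod q) ≠ -c' := fun h => hne1 (neg_injective h).symm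
      have h5 : (-c : Fin n → ZMod q) ≠ c' := fun h => hne2 (by rw [← h])
      have hsub : ({c, -c, c', -c'} : Finset _) ⊆ T.filter (fun z => leeW z = leeW c) := by
        intro z hz
        simp only [Finset.mem_insert, Finset.mem_singleton] at hz
        rcases hz with rfl | rfl | rfl | rfl
        · exact Finset.mem_filter.2 ⟨hc, rfl⟩
        · exact Finset.mem_filter.2 ⟨hnegT c hc, leeW_neg c⟩
        · exact Finset.mem_filter.2 ⟨hc', hw⟩
        · exact Finset.mem_filter.2 ⟨hnegT c' hc', by rw [leeW_neg]; exact hw⟩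
      have hcard4 : ({c, -c, c', -c'} : Finset _).card = 4 := by
        rw [Finset.card_insert_of_notMem (by simp [hccn, hne1.symm ∘ Eq.symm, h3]; tauto),
          Finset.card_insert_of_notMem (by simp; tauto),
          Finset.card_insert_of_notMem (by simpa using hccn'), Finset.card_singleton]
      calc 4 = ({c, -c, c', -c'} : Finset _).card := hcard4.symm
        _ ≤ _ := Finset.card_le_card hsub
    have hy0 : leeW c ∈ img := Finset.mem_image_of_mem leeW hc
    have hsum : T.card = ∑ y ∈ img, (T.filter (fun z => leeW z = y)).card :=
      Finset.card_eq_sum_card_image leeW T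
    have hrest : 2 * (img.erase (leeW c)).card ≤
        ∑ y ∈ img.erase (leeW c), (T.filter (fun z => leeW z = y)).card := by
      have := Finset.card_nsmul_le_sum (img.erase (leeW c))
        (fun y => (T.filter (fun z => leeW z = y)).card) 2
        (fun y hy => key y (Finset.mem_of_mem_erase hy))
      simpa [mul_comm] using this
    have hsplit : (T.filter (fun z => leeW z = leeW c)).card
        + ∑ y ∈ img.erase (leeW c), (T.filter (fun z => leeW z = y)).card
        = ∑ y ∈ img, (T.filter (fun z => leeW z = y)).card :=
      Finset.add_sum_erase img (fun y => (T.filter (fun z => leeW z = y)).card) hy0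
    have hecard : (img.erase (leeW c)).card = img.card - 1 :=
      Finset.card_erase_of_mem hy0
    have himgpos : 1 ≤ img.card := Finset.card_pos.2 ⟨_, hy0⟩
    obtain ⟨m, hm⟩ := hoddpow
    omega
  -- minimum Lee weight is at least k
  have hmin : ∀ c ∈ T, k ≤ leeW c := by
    intro c hcT
    by_contra hlt
    push_neg at hlt
    obtain ⟨hcC, hc0⟩ := (hTmem c).1 hcT
    set S : Finset (Fin n) := Finset.univ.filter (fun i => c i ≠ 0) with hS
    have hSmem : ∀ i, i ∈ S ↔ c i ≠ 0 := by intro i; simp [hS]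
    have hScard : S.card ≤ leeW c := by
      calc S.card = ∑ _i ∈ S, 1 := by simp
        _ ≤ ∑ i ∈ S, leeWt (c i) :=
          Finset.sum_le_sum (fun i hi => leeWt_pos ((hSmem i).1 hi))
        _ ≤ ∑ i, leeWt (c i) :=
          Finset.sum_le_sum_of_subset (Finset.subset_univ S)
        _ = leeW c := rfl
    -- a nonzero codeword vanishing on S
    let φ : C →ₗ[ZMod q] (S → ZMod q) :=
      { toFun := fun x i => (x : Fin n → ZMod q) i.1
        map_add' := fun x y => rfl
        map_smul' := fun r x => rfl }
    have hker : LinearMap.ker φ ≠ ⊥ := by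
      apply LinearMap.ker_ne_bot_of_finrank_lt (K := ZMod q)
      rw [Module.finrank_pi, hdim, Fintype.card_coe]
      omega
    obtain ⟨x, hxk, hx0⟩ := (Submodule.ne_bot_iff _).1 hker
    set y : Fin n → ZMod q := (x : Fin n → ZMod q) with hy
    have hy0 : y ≠ 0 := fun h => hx0 (Subtype.ext h)
    have hyS : ∀ i ∈ S, y i = 0 := by
      intro i hi
      exact congrFun (LinearMap.mem_ker.1 hxk) ⟨i, hi⟩
    have hcS : ∀ i ∉ S, c i = 0 := by
      intro i hi
      by_contra h
      exact hi ((hSmem i).2 h)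
    -- weights of y + c and y - c agree
    have hwsum : ∀ d : Fin n → ZMod q,
        leeW d = ∑ i ∈ S, leeWt (d i) + ∑ i ∈ Sᶜ, leeWt (d i) := by
      intro d
      unfold leeW
      rw [← Finset.sum_add_sum_compl S]
    have hweq : leeW (y + c) = leeW (y - c) := by
      rw [hwsum (y + c), hwsum (y - c)]
      congr 1
      · apply Finset.sum_congr rfl
        intro i hi
        rw [Pi.add_apply, Pi.sub_apply, hyS i hi, zero_add, zero_sub, leeWt_neg]
      · apply Finset.sum_congr rfl
        intro i hi
        rw [Finset.mem_compl] at hi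
        rw [Pi.add_apply, Pi.sub_apply, hcS i hi, add_zero, sub_zero]
    -- both are in T
    obtain ⟨i0, hi0⟩ : ∃ i, c i ≠ 0 := Function.ne_iff.1 hc0
    have hi0S : i0 ∈ S := (hSmem i0).2 hi0
    have hpT : y + c ∈ T := by
      refine (hTmem _).2 ⟨C.add_mem x.2 hcC, fun h => hi0 ?_⟩
      have := congrFun h i0
      rw [Pi.add_apply, hyS i0 hi0S, zero_add] at this
      exact this
    have hmT : y - c ∈ T := by
      refine (hTmem _).2 ⟨C.sub_mem x.2 hcC, fun h => hi0 ?_⟩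
      have := congrFun h i0
      rw [Pi.sub_apply, hyS i0 hi0S, zero_sub, Pi.zero_apply, neg_eq_zero] at this
      exact this
    rcases hinj (y + c) hpT (y - c) hmT hweq.symm with h | h
    · -- y - c = y + c  ⇒ c = 0
      apply hi0
      apply haddself
      have := congrFun h i0
      rw [Pi.sub_apply, Pi.add_apply] at this
      have : c i0 + c i0 = 0 := by linear_combination -this
      exact this
    · -- y - c = -(y + c) ⇒ y = 0
      apply hy0
      funext i
      apply haddself
      have := congrFun h i
      rw [Pi.sub_apply, Pi.neg_apply, Pi.add_apply] at this
      have : y i + y i = 0 := by linear_combination this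
      exact this
  -- upper bound on weights
  have hub : ∀ c ∈ T, leeW c ≤ n * ((q - 1) / 2) := by
    intro c _
    calc leeW c = ∑ i, leeWt (c i) := rfl
      _ ≤ ∑ _i : Fin n, (q - 1) / 2 := Finset.sum_le_sum (fun i _ => leeWt_le hodd (c i))
      _ = n * ((q - 1) / 2) := by simp [mul_comm]
  have hsub : img ⊆ Finset.Icc k (n * ((q - 1) / 2)) := by
    intro y hy
    obtain ⟨c, hcT, rfl⟩ := Finset.mem_image.1 hy
    exact Finset.mem_Icc.2 ⟨hmin c hcT, hub c hcT⟩
  have h1 : img.card ≤ n * ((q - 1) / 2) + 1 - k := by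
    have := Finset.card_le_card hsub
    rwa [Nat.card_Icc] at this
  have hM : n * (q - 1) = 2 * (n * ((q - 1) / 2)) := by
    obtain ⟨t, ht⟩ := hodd
    have h2 : q - 1 = 2 * ((q - 1) / 2) := by omega
    conv_lhs => rw [h2]
    ring
  have hqk : 3 ≤ q ^ k := le_trans hq3 (Nat.le_self_pow (by omega) q)
  obtain ⟨m, hm⟩ := hoddpow
  omega
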